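/- Let H ~ Lognormal(0, σ²), a > 0, b ∈ ℝ, and V = b + a/H with CDF F and PDF f. Then for v > b, the derivative of the virtual valuation c(v) = v + F(v)/f(v) equals 2 + ((1 − Φ(z))/φ(z))·(σ − z), where z = log(a/(v−b))/σ. -/

import Mathlib

open MeasureTheory Real Set Filter

/-- Standard normal PDF. -/
noncomputable def stdPdf (z : ℝ) : ℝ := (Real.sqrt (2 * Real.pi))⁻¹ * Real.exp (-z ^ 2 / 2)

/-- Standard normal CDF. -/
noncomputable def stdCdf (z : ℝ) : ℝ := ∫ t in Set.Iic z, stdPdf t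


lemma stdPdf_pos (z : ℝ) : 0 < stdPdf z := by
  have := Real.pi_pos
  unfold stdPdf
  positivity

lemma stdPdf_neg (z : ℝ) : stdPdf (-z) = stdPdf z := by simp [stdPdf]

lemma stdPdf_eq (z : ℝ) : stdPdf z = (Real.sqrt (2 * Real.pi))⁻¹ * Real.exp (-(1/2 : ℝ) * z ^ 2) := by
  unfold stdPdf; congr 1; ring

lemma integrable_stdPdf : Integrable stdPdf := by
  have h : Integrable (fun x : ℝ => Real.exp (-(1/2 : ℝ) * x ^ 2)) :=
    integrable_exp_neg_mul_sq (by norm_num)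
  have heq : stdPdf = fun z => (Real.sqrt (2 * Real.pi))⁻¹ * Real.exp (-(1/2 : ℝ) * z ^ 2) :=
    funext stdPdf_eq
  rw [heq]
  exact h.const_mul _

lemma integral_stdPdf : ∫ z, stdPdf z = 1 := by
  have h : ∫ z : ℝ, Real.exp (-(1/2 : ℝ) * z ^ 2) = Real.sqrt (Real.pi / (1/2)) :=
    integral_gaussian (1/2)
  have heq : stdPdf = fun z => (Real.sqrt (2 * Real.pi))⁻¹ * Real.exp (-(1/2 : ℝ) * z ^ 2) :=
    funext stdPdf_eq
  rw [heq, integral_const_mul, h, show Real.pi / (1/2) = 2 * Real.pi by ring, inv_mul_cancel₀]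
  positivity

lemma stdCdf_neg (z : ℝ) : stdCdf (-z) = 1 - stdCdf z := by
  have h1 : stdCdf (-z) = ∫ x in Ioi z, stdPdf x := by
    rw [stdCdf, show (∫ t in Set.Iic (-z), stdPdf t) = ∫ t in Set.Iic (-z), stdPdf (-t) by
      simp [stdPdf_neg], integral_comp_neg_Iic, neg_neg]
  have h2 := intervalIntegral.integral_Iic_add_Ioi (b := z) (μ := volume) (f := stdPdf)
    integrable_stdPdf.integrableOn integrable_stdPdf.integrableOn
  rw [integral_stdPdf] at h2
  rw [h1, stdCdf]; linarith

lemma continuous_stdPdf : Continuous stdPdf := by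
  unfold stdPdf; continuity

lemma hasDerivAt_stdCdf (x : ℝ) : HasDerivAt stdCdf (stdPdf x) x := by
  have heq : stdCdf = fun u => stdCdf 0 + ∫ t in (0:ℝ)..u, stdPdf t := by
    funext u
    rw [stdCdf, stdCdf, ← intervalIntegral.integral_Iic_sub_Iic integrable_stdPdf.integrableOn
      integrable_stdPdf.integrableOn]
    ring
  rw [heq]
  exact ((intervalIntegral.integral_hasDerivAt_right
    (integrable_stdPdf.intervalIntegrable)
    (continuous_stdPdf.stronglyMeasurableAtFilter _ _)
    continuous_stdPdf.continuousAt).const_add _)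

lemma hasDerivAt_stdPdf (x : ℝ) : HasDerivAt stdPdf (-x * stdPdf x) x := by
  have h1 : HasDerivAt (fun z : ℝ => -z ^ 2 / 2) (-x) x := by
    have h := ((hasDerivAt_pow 2 x).neg).div_const 2
    norm_num at h
    refine h.congr_deriv ?_
    ring
  have h2 := (h1.exp).const_mul (Real.sqrt (2 * Real.pi))⁻¹
  unfold stdPdf
  refine h2.congr_deriv ?_
  ring

/-- PDF of a Lognormal(0, σ²) random variable. -/
noncomputable def lnPdf (σ h : ℝ) : ℝ :=
  (h * σ * Real.sqrt (2 * Real.pi))⁻¹ * Real.exp (-(Real.log h) ^ 2 / (2 * σ ^ 2))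

/-- CDF of the valuation V = b + a/H, H ~ Lognormal(0, σ²). -/
noncomputable def Fval (σ a b v : ℝ) : ℝ := stdCdf (Real.log ((v - b) / a) / σ)

/-- PDF of the valuation V = b + a/H, via change of variables. -/
noncomputable def fval (σ a b v : ℝ) : ℝ := lnPdf σ (a / (v - b)) * (a / (v - b) ^ 2)

/-- Virtual valuation c(v) = v + F(v)/f(v). -/
noncomputable def cval (σ a b v : ℝ) : ℝ := v + Fval σ a b v / fval σ a b v

lemma fval_eq (σ a b : ℝ) (hσ : 0 < σ) (ha : 0 < a) {u : ℝ} (hu : b < u) :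
    fval σ a b u = stdPdf (Real.log ((u - b) / a) / σ) / (σ * (u - b)) := by
  have hub : (0:ℝ) < u - b := by linarith
  have hlog : Real.log (a / (u - b)) = -Real.log ((u - b) / a) := by
    rw [Real.log_div (ne_of_gt ha) (ne_of_gt hub), Real.log_div (ne_of_gt hub) (ne_of_gt ha)]
    ring
  unfold fval lnPdf stdPdf
  rw [hlog]
  have hexp : Real.exp (-(-Real.log ((u - b) / a)) ^ 2 / (2 * σ ^ 2)) =
      Real.exp (-(Real.log ((u - b) / a) / σ) ^ 2 / 2) := by
    have hσ' : σ ≠ 0 := ne_of_gt hσ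
    congr 1
    generalize Real.log ((u - b) / a) = L
    field_simp
  rw [hexp]
  have h2π : (0:ℝ) < Real.sqrt (2 * Real.pi) := by
    have := Real.pi_pos; positivity
  field_simp

/-- The derivative of the virtual valuation c(v) = v + F(v)/f(v) of the
valuation V = b + a/H (H lognormal) equals 2 + ((1 − Φ(z))/φ(z))·(σ − z), z = log(a/(v−b))/σ. -/
theorem virtual_valuation_hasDerivAt (σ a b v : ℝ) (hσ : 0 < σ) (ha : 0 < a) (hv : b < v) :
    HasDerivAt (cval σ a b)
      (2 + (1 - stdCdf (Real.log (a / (v - b)) / σ)) / stdPdf (Real.log (a / (v - b)) / σ)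
        * (σ - Real.log (a / (v - b)) / σ)) v := by
  have hvb : (0:ℝ) < v - b := by linarith
  set z : ℝ → ℝ := fun u => Real.log ((u - b) / a) / σ with hzdef
  -- derivative of z
  have hinner : HasDerivAt (fun u => (u - b) / a) (1 / a) v :=
    (((hasDerivAt_id v).sub_const b).div_const a).congr_deriv (by simp)
  have hfrac : (0:ℝ) < (v - b) / a := by positivity
  have hlogd : HasDerivAt (fun u => Real.log ((u - b) / a)) (1 / (v - b)) v := by
    have := (Real.hasDerivAt_log (ne_of_gt hfrac)).comp v hinner
    refine this.congr_deriv ?_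
    field_simp
  have hz : HasDerivAt z (1 / (σ * (v - b))) v := by
    have := hlogd.div_const σ
    refine this.congr_deriv ?_
    field_simp
  -- derivative of composed pieces
  have hΦ : HasDerivAt (fun u => stdCdf (z u)) (stdPdf (z v) * (1 / (σ * (v - b)))) v :=
    (hasDerivAt_stdCdf (z v)).comp v hz
  have hφ : HasDerivAt (fun u => stdPdf (z u)) (-(z v) * stdPdf (z v) * (1 / (σ * (v - b)))) v :=
    (hasDerivAt_stdPdf (z v)).comp v hz
  have hφne : stdPdf (z v) ≠ 0 := ne_of_gt (stdPdf_pos _)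
  -- numerator: σ*(u-b)*stdCdf(z u)
  have hnum : HasDerivAt (fun u => σ * (u - b) * stdCdf (z u))
      (σ * stdCdf (z v) + σ * (v - b) * (stdPdf (z v) * (1 / (σ * (v - b))))) v := by
    have h1 : HasDerivAt (fun u => σ * (u - b)) σ v :=
      (((hasDerivAt_id v).sub_const b).const_mul σ).congr_deriv (by ring)
    exact (h1.mul hΦ).congr_deriv (by ring)
  have hG : HasDerivAt (fun u => u + σ * (u - b) * stdCdf (z u) / stdPdf (z u))
      (1 + ((σ * stdCdf (z v) + σ * (v - b) * (stdPdf (z v) * (1 / (σ * (v - b))))) * stdPdf (z v)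
        - σ * (v - b) * stdCdf (z v) * (-(z v) * stdPdf (z v) * (1 / (σ * (v - b)))))
        / (stdPdf (z v)) ^ 2) v :=
    (hasDerivAt_id v).add (hnum.div hφ hφne)
  -- rewrite target
  have hlog : Real.log (a / (v - b)) = -Real.log ((v - b) / a) := by
    rw [Real.log_div (ne_of_gt ha) (ne_of_gt hvb), Real.log_div (ne_of_gt hvb) (ne_of_gt ha)]
    ring
  have htgt : 2 + (1 - stdCdf (Real.log (a / (v - b)) / σ)) / stdPdf (Real.log (a / (v - b)) / σ)
        * (σ - Real.log (a / (v - b)) / σ)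
      = 1 + ((σ * stdCdf (z v) + σ * (v - b) * (stdPdf (z v) * (1 / (σ * (v - b))))) * stdPdf (z v)
        - σ * (v - b) * stdCdf (z v) * (-(z v) * stdPdf (z v) * (1 / (σ * (v - b)))))
        / (stdPdf (z v)) ^ 2 := by
    rw [hlog, neg_div, stdCdf_neg, stdPdf_neg]
    simp only [hzdef]
    have hp : stdPdf (Real.log ((v - b) / a) / σ) ≠ 0 := ne_of_gt (stdPdf_pos _)
    field_simp
    ring
  rw [htgt]
  -- cval agrees with G near v
  refine hG.congr_of_eventuallyEq ?_
  have hmem : {u : ℝ | b < u} ∈ nhds v := (isOpen_lt continuous_const continuous_id).mem_nhds hv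
  filter_upwards [hmem] with u hu
  have hub : (0:ℝ) < u - b := by have : b < u := hu; linarith
  unfold cval Fval
  rw [fval_eq σ a b hσ ha hu]
  rw [div_div_eq_mul_div]
  simp only [hzdef]
  ring_nf
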